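/- arXiv:2301.04981 — 5 statements merged into one kernel-verified Lean document; each statement's English description precedes it below -/
import Mathlib

section
/- Let U be an N×N complex unitary matrix, k ≤ N, and P_k = (I_k | 0) ∈ C^{k×N} the projection onto the first k coordinates. Let Q ∈ R^{2k×N} be the real matrix whose top k×N block is Re(P_k U) and whose bottom k×N block is −Im(P_k U). If m_1 ≤ … ≤ m_{2k} are the singular values of Q, then m_{2k} ≤ 1 and m_{k+1} ≥ 1/√(k+1). -/
/-!
Write `P = A + iB` for the first `k` rows of `U`, so that `Q` stacks `A` over `-B`.
The real and imaginary parts of `P Pᴴ = 1` say `A Aᵀ + B Bᵀ = 1` and `B Aᵀ = A Bᵀ`, hence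
`Q Qᵀ + R Rᵀ = 1` for `R` stacking `B` over `A`. So `Q Qᵀ ≤ 1`, its eigenvalues `m_i²` lie
in `[0, 1]`, and they sum to `tr (Q Qᵀ) = tr (A Aᵀ + B Bᵀ) = k`. If `m_{k+1}² < 1/(k+1)`,
the `k + 1` smallest squares would contribute less than `1` and the other `k - 1` at most
`k - 1`.
-/

open Matrix

namespace Matrix

lemma trace_fromBlocks {l m R : Type*} [Fintype l] [Fintype m] [AddCommMonoid R]
    (A : Matrix l l R) (B : Matrix l m R) (C : Matrix m l R) (D : Matrix m m R) :
    trace (fromBlocks A B C D) = trace A + trace D := by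
  simp [trace]

variable {m n : Type*} [Fintype n]

lemma map_re_mul_conjTranspose (P : Matrix m n ℂ) :
    (P * Pᴴ).map Complex.re = P.map Complex.re * (P.map Complex.re)ᵀ
      + P.map Complex.im * (P.map Complex.im)ᵀ := by
  ext i j
  simp [mul_apply, Complex.re_sum, ← Finset.sum_add_distrib]

lemma map_im_mul_conjTranspose (P : Matrix m n ℂ) :
    (P * Pᴴ).map Complex.im = P.map Complex.im * (P.map Complex.re)ᵀ
      - P.map Complex.re * (P.map Complex.im)ᵀ := by
  ext i j
  simp [mul_apply, Complex.im_sum, ← Finset.sum_sub_distrib, neg_add_eq_sub]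

/-- The paper's `Q` for `P = P_k U`, with its rows indexed by `m ⊕ m` rather than `Fin (2k)`. -/
def realForm (P : Matrix m n ℂ) : Matrix (m ⊕ m) n ℝ :=
  fromRows (P.map Complex.re) (-P.map Complex.im)

variable [DecidableEq m]

lemma realForm_mul_transpose_add (P : Matrix m n ℂ) (hP : P * Pᴴ = 1) :
    realForm P * (realForm P)ᵀ
      + fromRows (P.map Complex.im) (P.map Complex.re)
        * (fromRows (P.map Complex.im) (P.map Complex.re))ᵀ = 1 := by
  have hre :
      P.map Complex.re * (P.map Complex.re)ᵀ + P.map Complex.im * (P.map Complex.im)ᵀ = 1 := by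
    rw [← map_re_mul_conjTranspose, hP, Matrix.map_one _ Complex.zero_re Complex.one_re]
  have him :
      P.map Complex.im * (P.map Complex.re)ᵀ - P.map Complex.re * (P.map Complex.im)ᵀ = 0 := by
    rw [← map_im_mul_conjTranspose, hP]
    ext i j
    by_cases h : i = j <;> simp [h]
  simp only [realForm, transpose_fromRows, fromRows_mul_fromCols, fromBlocks_add, transpose_neg,
    Matrix.neg_mul, Matrix.mul_neg, neg_neg, ← fromBlocks_one]
  rw [fromBlocks_inj]
  refine ⟨hre, ?_, ?_, by rw [add_comm, hre]⟩
  · rw [neg_add_eq_sub, him]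
  · rw [neg_add_eq_sub, ← neg_sub, him, neg_zero]

variable [Fintype m]

lemma posSemidef_one_sub_realForm_mul_transpose (P : Matrix m n ℂ) (hP : P * Pᴴ = 1) :
    (1 - realForm P * (realForm P)ᵀ).PosSemidef := by
  rw [← realForm_mul_transpose_add P hP, add_sub_cancel_left,
    ← conjTranspose_eq_transpose_of_trivial]
  exact posSemidef_self_mul_conjTranspose _

lemma trace_realForm_mul_transpose (P : Matrix m n ℂ) (hP : P * Pᴴ = 1) :
    trace (realForm P * (realForm P)ᵀ) = Fintype.card m := by
  rw [realForm, transpose_fromRows, fromRows_mul_fromCols, trace_fromBlocks, transpose_neg,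
    Matrix.neg_mul, Matrix.mul_neg, neg_neg, ← trace_add, ← map_re_mul_conjTranspose, hP,
    Matrix.map_one _ Complex.zero_re Complex.one_re, trace_one]

end Matrix

open scoped ComplexOrder in
lemma Matrix.IsHermitian.eigenvalues_le_one {𝕜 n : Type*} [RCLike 𝕜] [Fintype n]
    [DecidableEq n] {A : Matrix n n 𝕜} (hA : A.IsHermitian) (h : (1 - A).PosSemidef) (i : n) :
    hA.eigenvalues i ≤ 1 := by
  set v := hA.eigenvectorBasis i
  have hv : star ⇑v ⬝ᵥ ⇑v = 1 := by
    rw [dotProduct_comm, ← EuclideanSpace.inner_eq_star_dotProduct, inner_self_eq_norm_sq_to_K,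
      hA.eigenvectorBasis.orthonormal.1 i]
    simp
  have := h.re_dotProduct_nonneg v
  rw [sub_mulVec, one_mulVec, dotProduct_sub, hv, map_sub, RCLike.one_re,
    ← hA.eigenvalues_eq] at this
  linarith

lemma Fin.sum_sub_one_le_of_monotone {n : ℕ} {f : Fin n → ℝ} (hf : Monotone f)
    (h1 : ∀ i, f i ≤ 1) (j : Fin n) : ∑ i, (f i - 1) ≤ (j + 1 : ℝ) * (f j - 1) :=
  calc ∑ i, (f i - 1) ≤ ∑ i ∈ Finset.Iic j, (f i - 1) :=
        Finset.sum_le_sum_of_subset_of_nonpos' (Finset.subset_univ _)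
          fun i _ _ => by linarith [h1 i]
    _ ≤ ∑ _i ∈ Finset.Iic j, (f j - 1) :=
        Finset.sum_le_sum fun i hi => by linarith [hf (Finset.mem_Iic.mp hi)]
    _ = (j + 1 : ℝ) * (f j - 1) := by simp [Fin.card_Iic, mul_sub]

lemma one_div_sqrt_succ_le_of_sum_sq_eq {k : ℕ} {m : Fin (2 * k) → ℝ} (hmono : Monotone m)
    (hnn : ∀ i, 0 ≤ m i) (hle : ∀ i, m i ≤ 1) (hsum : ∑ i, m i ^ 2 = k) (hk : k < 2 * k) :
    1 / √(k + 1) ≤ m ⟨k, hk⟩ := by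
  have key := Fin.sum_sub_one_le_of_monotone (f := fun i => m i ^ 2)
    (fun i j h => pow_le_pow_left₀ (hnn i) (hmono h) 2) (fun i => pow_le_one₀ (hnn i) (hle i))
    ⟨k, hk⟩
  rw [Finset.sum_sub_distrib, hsum] at key
  simp only [Finset.sum_const, Finset.card_univ, Fintype.card_fin, nsmul_eq_mul, mul_one] at key
  push_cast at key
  have hsq : ((k : ℝ) + 1)⁻¹ ≤ m ⟨k, hk⟩ ^ 2 := by
    rw [inv_le_iff_one_le_mul₀ (by positivity)]
    linarith
  rw [one_div, ← Real.sqrt_inv, ← Real.sqrt_sq (hnn _)]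
  exact Real.sqrt_le_sqrt hsq

/-- For a unitary `U`, the real `2k × N` matrix `Q` with blocks
`Re(P_k U)` and `-Im(P_k U)` has largest singular value `m_{2k} ≤ 1` and
`(k+1)`-st smallest singular value `m_{k+1} ≥ 1/√(k+1)`. -/
theorem singular_values_of_realified_unitary_block (N k : ℕ) (hk1 : 1 ≤ k) (hkN : k ≤ N)
    (U : Matrix (Fin N) (Fin N) ℂ) (hU : U ∈ Matrix.unitaryGroup (Fin N) ℂ)
    (Q : Matrix (Fin (2 * k)) (Fin N) ℝ)
    (hQtop : ∀ (i : Fin k) (j : Fin N),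
      Q ⟨i, by have := i.2; omega⟩ j = (U (Fin.castLE hkN i) j).re)
    (hQbot : ∀ (i : Fin k) (j : Fin N),
      Q ⟨k + i, by have := i.2; omega⟩ j = -(U (Fin.castLE hkN i) j).im)
    (hQQ : (Q * Qᵀ).IsHermitian)
    (m : Fin (2 * k) → ℝ) (hmono : Monotone m) (hnn : ∀ i, 0 ≤ m i)
    (hm : ∃ e : Fin (2 * k) ≃ Fin (2 * k), ∀ i, m i ^ 2 = hQQ.eigenvalues (e i)) :
    m ⟨2 * k - 1, by omega⟩ ≤ 1 ∧ 1 / Real.sqrt (k + 1) ≤ m ⟨k, by omega⟩ := by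
  set σ : Fin k ⊕ Fin k ≃ Fin (2 * k) := finSumFinEquiv.trans (finCongr (two_mul k).symm)
  set P : Matrix (Fin k) (Fin N) ℂ := U.submatrix (Fin.castLE hkN) id
  have hP : P * Pᴴ = 1 := by
    rw [conjTranspose_submatrix, ← submatrix_mul _ _ _ _ _ Function.bijective_id,
      ← star_eq_conjTranspose, mem_unitaryGroup_iff.mp hU,
      submatrix_one _ (Fin.castLE_injective hkN)]
  have hQ : Q.submatrix σ id = realForm P := by
    ext (i | i) j
    · exact hQtop i j
    · exact hQbot i j
  have hQQσ : (Q * Qᵀ).submatrix σ σ = realForm P * (realForm P)ᵀ := by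
    rw [← hQ, transpose_submatrix, ← submatrix_mul _ _ _ _ _ Function.bijective_id]
  have hev_le : ∀ i, hQQ.eigenvalues i ≤ 1 := hQQ.eigenvalues_le_one <| by
    have h : (1 - Q * Qᵀ).submatrix σ σ = 1 - realForm P * (realForm P)ᵀ := by
      rw [← hQQσ, ← submatrix_one_equiv σ]
      rfl
    rw [← posSemidef_submatrix_equiv σ, h]
    exact posSemidef_one_sub_realForm_mul_transpose P hP
  have hev_sum : ∑ i, hQQ.eigenvalues i = k := by
    have htr : trace ((Q * Qᵀ).submatrix σ σ) = trace (Q * Qᵀ) :=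
      Equiv.sum_comp σ fun i => (Q * Qᵀ) i i
    rw [hQQσ, trace_realForm_mul_transpose P hP, hQQ.trace_eq_sum_eigenvalues] at htr
    simpa using htr.symm
  obtain ⟨e, he⟩ := hm
  have hm_le : ∀ i, m i ≤ 1 := fun i =>
    (pow_le_one_iff_of_nonneg (hnn i) two_ne_zero).mp (he i ▸ hev_le (e i))
  have hm_sum : ∑ i, m i ^ 2 = k := by
    simp only [he, Equiv.sum_comp e hQQ.eigenvalues, hev_sum]
  exact ⟨hm_le _, one_div_sqrt_succ_le_of_sum_sq_eq hmono hnn hm_le hm_sum _⟩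
end

section
/- Let Y, B be real N×N matrices, J the (N−1)×N matrix deleting the first row, and v ∈ C^N a unit null vector of J(Y + iB). Let w ∈ R^N be the unit null vector of JB and assume λ_1(B), the smallest singular value of B, is positive. Then for every θ ∈ [0, 2π], λ_1(B)^2 · (1 − |w^* v|^2) ≤ (‖JY‖ + ‖B‖)^2 · ‖Re(e^{iθ} v)‖^2. -/
/-!
Write `e^{iθ} v = x + i y` with `x, y` real. Taking real parts of `e^{iθ} J(Y + iB) v = 0` gives
`JB y = JY x`, and `1 - |w^* v|² = (‖x‖² - ⟨w, x⟩²) + (‖y‖² - ⟨w, y⟩²)` is the sum of the squared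
norms of the components `x', y'` of `x, y` orthogonal to `w`. The first is controlled by
`λ₁(B) ‖x'‖ ≤ ‖B x'‖ ≤ ‖B‖ ‖x‖`. For the second, move `y'` along `w` until the first entry of
`B y'` vanishes (possible unless `B w = 0`, and then `λ₁(B) = 0`): this does not change `JB y'`,
as `JB w = 0`, and does not shrink `y'`, as `y' ⊥ w`. Hence the interlacing bound
`λ₁(B) ‖y'‖ ≤ ‖JB y'‖ = ‖JY x‖ ≤ ‖JY‖ ‖x‖`.
-/

open Matrix

/-- Euclidean norm of a real vector. -/
noncomputable def rnorm {n : Type*} [Fintype n] (v : n → ℝ) : ℝ :=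
  Real.sqrt (∑ i, v i ^ 2)

/-- Euclidean norm of a complex vector. -/
noncomputable def cnorm {n : Type*} [Fintype n] (v : n → ℂ) : ℝ :=
  Real.sqrt (∑ i, Complex.normSq (v i))

/-- Operator norm of a real matrix. -/
noncomputable def ropNorm {m n : Type*} [Fintype m] [Fintype n] (M : Matrix m n ℝ) : ℝ :=
  sSup {c | ∃ v : n → ℝ, rnorm v ≤ 1 ∧ c = rnorm (M.mulVec v)}

/-- Smallest singular value of a real square matrix. -/
noncomputable def smin {n : Type*} [Fintype n] (M : Matrix n n ℝ) : ℝ :=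
  sInf {c | ∃ v : n → ℝ, rnorm v = 1 ∧ c = rnorm (M.mulVec v)}

/-- The `(N-1) × N` matrix deleting the first row. -/
def delRow (N : ℕ) (R : Type*) [Zero R] [One R] : Matrix (Fin (N - 1)) (Fin N) R :=
  fun i j => if (j : ℕ) = (i : ℕ) + 1 then 1 else 0

section Norms

variable {m n : Type*} [Fintype m] [Fintype n]

lemma rnorm_eq_norm (v : n → ℝ) : rnorm v = ‖(WithLp.toLp 2 v : EuclideanSpace ℝ n)‖ := by
  simp [rnorm, EuclideanSpace.norm_eq]

lemma cnorm_eq_norm (v : n → ℂ) : cnorm v = ‖(WithLp.toLp 2 v : EuclideanSpace ℂ n)‖ := by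
  simp [cnorm, EuclideanSpace.norm_eq, Complex.normSq_eq_norm_sq]

lemma rnorm_nonneg (v : n → ℝ) : 0 ≤ rnorm v := Real.sqrt_nonneg _

@[simp]
lemma rnorm_zero : rnorm (0 : n → ℝ) = 0 := by
  simp [rnorm]

lemma rnorm_sq (v : n → ℝ) : rnorm v ^ 2 = ∑ i, v i ^ 2 :=
  Real.sq_sqrt (by positivity)

lemma rnorm_sq_eq_dotProduct (v : n → ℝ) : rnorm v ^ 2 = v ⬝ᵥ v := by
  rw [rnorm_sq]
  simp only [dotProduct, sq]

lemma rnorm_smul (c : ℝ) (v : n → ℝ) : rnorm (c • v) = |c| * rnorm v := by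
  simp [rnorm_eq_norm, norm_smul]

lemma rnorm_pos {v : n → ℝ} (hv : v ≠ 0) : 0 < rnorm v := by
  simpa [rnorm_eq_norm] using hv

lemma cnorm_smul (c : ℂ) (v : n → ℂ) : cnorm (c • v) = ‖c‖ * cnorm v := by
  simp [cnorm_eq_norm, norm_smul]

lemma cnorm_sq (v : n → ℂ) :
    cnorm v ^ 2 = rnorm (fun i => (v i).re) ^ 2 + rnorm (fun i => (v i).im) ^ 2 := by
  rw [cnorm, rnorm, rnorm, Real.sq_sqrt (Finset.sum_nonneg fun i _ => Complex.normSq_nonneg _),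
    Real.sq_sqrt (by positivity), Real.sq_sqrt (by positivity), ← Finset.sum_add_distrib]
  simp [Complex.normSq_apply, sq]

lemma ropNorm_eq_opNorm [DecidableEq n] (M : Matrix m n ℝ) :
    ropNorm M = ‖LinearMap.toContinuousLinearMap (toEuclideanLin M)‖ := by
  rw [← ContinuousLinearMap.sSup_unitClosedBall_eq_norm, ropNorm]
  congr 1
  ext c
  simp only [Set.mem_ofPred_eq, Set.mem_image, Metric.mem_closedBall, dist_zero_right]
  constructor
  · rintro ⟨v, hv, rfl⟩
    exact ⟨WithLp.toLp 2 v, by rwa [rnorm_eq_norm] at hv, by simp [rnorm_eq_norm]⟩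
  · rintro ⟨x, hx, rfl⟩
    exact ⟨WithLp.ofLp x, by simpa [rnorm_eq_norm] using hx, by simp [rnorm_eq_norm, toLpLin_apply]⟩

lemma rnorm_mulVec_le (M : Matrix m n ℝ) (v : n → ℝ) :
    rnorm (M *ᵥ v) ≤ ropNorm M * rnorm v := by
  classical
  simpa [ropNorm_eq_opNorm, rnorm_eq_norm] using
    (LinearMap.toContinuousLinearMap (toEuclideanLin M)).le_opNorm (WithLp.toLp 2 v)

lemma ropNorm_nonneg (M : Matrix m n ℝ) : 0 ≤ ropNorm M := by
  classical
  simp [ropNorm_eq_opNorm]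

lemma smin_nonneg (M : Matrix n n ℝ) : 0 ≤ smin M :=
  Real.sInf_nonneg fun _ ⟨_, _, hc⟩ => hc ▸ rnorm_nonneg _

lemma smin_mul_rnorm_le (M : Matrix n n ℝ) (v : n → ℝ) :
    smin M * rnorm v ≤ rnorm (M *ᵥ v) := by
  rcases eq_or_ne v 0 with rfl | hv
  · simp
  have hpos := rnorm_pos hv
  have hunit : rnorm ((rnorm v)⁻¹ • v) = 1 := by
    rw [rnorm_smul, abs_of_pos (inv_pos.2 hpos), inv_mul_cancel₀ hpos.ne']
  have hle : smin M ≤ rnorm (M *ᵥ ((rnorm v)⁻¹ • v)) :=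
    csInf_le ⟨0, fun _ ⟨_, _, hc⟩ => hc ▸ rnorm_nonneg _⟩ ⟨_, hunit, rfl⟩
  rw [mulVec_smul, rnorm_smul, abs_of_pos (inv_pos.2 hpos), inv_mul_eq_div,
    le_div_iff₀ hpos] at hle
  exact hle

lemma rnorm_le_rnorm_sub_smul {u w : n → ℝ} (h : w ⬝ᵥ u = 0) (t : ℝ) :
    rnorm u ≤ rnorm (u - t • w) := by
  refine pow_le_pow_iff_left₀ (rnorm_nonneg _) (rnorm_nonneg _) two_ne_zero |>.1 ?_
  rw [rnorm_sq_eq_dotProduct, rnorm_sq_eq_dotProduct]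
  simp only [sub_dotProduct, dotProduct_sub, smul_dotProduct, dotProduct_smul, dotProduct_comm u w,
    h, zero_sub, smul_eq_mul, ← rnorm_sq_eq_dotProduct w]
  nlinarith [mul_nonneg (sq_nonneg t) (sq_nonneg (rnorm w))]

lemma dotProduct_sub_dotProduct_smul_eq_zero {w : n → ℝ} (hw : rnorm w = 1) (y : n → ℝ) :
    w ⬝ᵥ (y - (w ⬝ᵥ y) • w) = 0 := by
  have hww : w ⬝ᵥ w = 1 := by rw [← rnorm_sq_eq_dotProduct, hw, one_pow]
  simp [dotProduct_sub, dotProduct_smul, hww]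

lemma rnorm_sub_dotProduct_smul_sq {w : n → ℝ} (hw : rnorm w = 1) (y : n → ℝ) :
    rnorm (y - (w ⬝ᵥ y) • w) ^ 2 = rnorm y ^ 2 - (w ⬝ᵥ y) ^ 2 := by
  have hww : w ⬝ᵥ w = 1 := by rw [← rnorm_sq_eq_dotProduct, hw, one_pow]
  simp only [rnorm_sq_eq_dotProduct, sub_dotProduct, dotProduct_sub, smul_dotProduct,
    dotProduct_smul, dotProduct_comm y w, hww, smul_eq_mul]
  ring

lemma rnorm_sub_dotProduct_smul_le {w : n → ℝ} (hw : rnorm w = 1) (y : n → ℝ) :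
    rnorm (y - (w ⬝ᵥ y) • w) ≤ rnorm y := by
  refine pow_le_pow_iff_left₀ (rnorm_nonneg _) (rnorm_nonneg _) two_ne_zero |>.1 ?_
  rw [rnorm_sub_dotProduct_smul_sq hw]
  nlinarith [sq_nonneg (w ⬝ᵥ y)]

end Norms

section DeleteFirstRow

variable {n : ℕ}

lemma delRow_mulVec {R : Type*} [NonAssocSemiring R] (x : Fin (n + 1) → R) :
    delRow (n + 1) R *ᵥ x = fun i : Fin n => x i.succ := by
  funext i
  have hsucc (j : Fin (n + 1)) : (j : ℕ) = i + 1 ↔ j = i.succ := by simp [Fin.ext_iff]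
  simp [mulVec, dotProduct, delRow, hsucc]

lemma rnorm_delRow_mulVec {x : Fin (n + 1) → ℝ} (hx : x 0 = 0) :
    rnorm (delRow (n + 1) ℝ *ᵥ x) = rnorm x := by
  rw [delRow_mulVec]
  simp [rnorm, Fin.sum_univ_succ (n := n), hx]

lemma map_delRow (N : ℕ) : (delRow N ℝ).map ((↑) : ℝ → ℂ) = delRow N ℂ := by
  ext i j
  simp [delRow, apply_ite]

lemma smin_mul_rnorm_le_rnorm_delRow_mul_mulVec (B : Matrix (Fin (n + 1)) (Fin (n + 1)) ℝ)
    {w u : Fin (n + 1) → ℝ} (hw : w ≠ 0) (hwnull : (delRow (n + 1) ℝ * B) *ᵥ w = 0)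
    (hu : w ⬝ᵥ u = 0) :
    smin B * rnorm u ≤ rnorm ((delRow (n + 1) ℝ * B) *ᵥ u) := by
  rw [← mulVec_mulVec] at hwnull ⊢
  have hBw_succ (i : Fin n) : (B *ᵥ w) i.succ = 0 := by
    simpa only [delRow_mulVec, Pi.zero_apply] using congrFun hwnull i
  by_cases hBw_zero : (B *ᵥ w) 0 = 0
  · have hBw : B *ᵥ w = 0 := funext (Fin.cases hBw_zero hBw_succ)
    have hsmin : smin B = 0 := by
      have hle := smin_mul_rnorm_le B w
      rw [hBw, rnorm_zero] at hle
      exact le_antisymm (nonpos_of_mul_nonpos_left hle (rnorm_pos hw)) (smin_nonneg B)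
    rw [hsmin, zero_mul]
    exact rnorm_nonneg _
  set t := (B *ᵥ u) 0 / (B *ᵥ w) 0
  have hz : (B *ᵥ (u - t • w)) 0 = 0 := by
    simp [mulVec_sub, mulVec_smul, t, hBw_zero]
  calc smin B * rnorm u ≤ smin B * rnorm (u - t • w) := by
        gcongr
        · exact smin_nonneg B
        · exact rnorm_le_rnorm_sub_smul hu t
    _ ≤ rnorm (B *ᵥ (u - t • w)) := smin_mul_rnorm_le _ _
    _ = rnorm (delRow (n + 1) ℝ *ᵥ (B *ᵥ (u - t • w))) := (rnorm_delRow_mulVec hz).symm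
    _ = rnorm (delRow (n + 1) ℝ *ᵥ (B *ᵥ u)) := by
        rw [mulVec_sub, mulVec_smul, mulVec_sub, mulVec_smul, hwnull, smul_zero, sub_zero]

lemma smin_sq_mul_sub_le {Y B : Matrix (Fin (n + 1)) (Fin (n + 1)) ℝ}
    {w x y : Fin (n + 1) → ℝ} (hw : rnorm w = 1) (hwnull : (delRow (n + 1) ℝ * B) *ᵥ w = 0)
    (hxy : (delRow (n + 1) ℝ * B) *ᵥ y = (delRow (n + 1) ℝ * Y) *ᵥ x) :
    smin B ^ 2 * (rnorm x ^ 2 + rnorm y ^ 2 - ((w ⬝ᵥ x) ^ 2 + (w ⬝ᵥ y) ^ 2)) ≤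
      (ropNorm (delRow (n + 1) ℝ * Y) + ropNorm B) ^ 2 * rnorm x ^ 2 := by
  have hx : smin B * rnorm (x - (w ⬝ᵥ x) • w) ≤ ropNorm B * rnorm x :=
    calc _ ≤ rnorm (B *ᵥ (x - (w ⬝ᵥ x) • w)) := smin_mul_rnorm_le _ _
      _ ≤ ropNorm B * rnorm (x - (w ⬝ᵥ x) • w) := rnorm_mulVec_le _ _
      _ ≤ ropNorm B * rnorm x := by
        gcongr
        · exact ropNorm_nonneg B
        · exact rnorm_sub_dotProduct_smul_le hw x
  have hy : smin B * rnorm (y - (w ⬝ᵥ y) • w) ≤ ropNorm (delRow (n + 1) ℝ * Y) * rnorm x :=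
    calc _ ≤ rnorm ((delRow (n + 1) ℝ * B) *ᵥ (y - (w ⬝ᵥ y) • w)) :=
          smin_mul_rnorm_le_rnorm_delRow_mul_mulVec B (by rintro rfl; simp at hw) hwnull
            (dotProduct_sub_dotProduct_smul_eq_zero hw y)
      _ = rnorm ((delRow (n + 1) ℝ * Y) *ᵥ x) := by
        rw [mulVec_sub, mulVec_smul, hwnull, smul_zero, sub_zero, hxy]
      _ ≤ ropNorm (delRow (n + 1) ℝ * Y) * rnorm x := rnorm_mulVec_le _ _
  have hsmin := smin_nonneg B
  calc smin B ^ 2 * (rnorm x ^ 2 + rnorm y ^ 2 - ((w ⬝ᵥ x) ^ 2 + (w ⬝ᵥ y) ^ 2))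
      = (smin B * rnorm (x - (w ⬝ᵥ x) • w)) ^ 2 + (smin B * rnorm (y - (w ⬝ᵥ y) • w)) ^ 2 := by
        rw [mul_pow, mul_pow, rnorm_sub_dotProduct_smul_sq hw, rnorm_sub_dotProduct_smul_sq hw]
        ring
    _ ≤ (ropNorm B * rnorm x) ^ 2 + (ropNorm (delRow (n + 1) ℝ * Y) * rnorm x) ^ 2 := by
        gcongr
        · exact mul_nonneg hsmin (rnorm_nonneg _)
        · exact mul_nonneg hsmin (rnorm_nonneg _)
    _ ≤ (ropNorm (delRow (n + 1) ℝ * Y) + ropNorm B) ^ 2 * rnorm x ^ 2 := by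
        nlinarith [mul_nonneg (mul_nonneg (ropNorm_nonneg (delRow (n + 1) ℝ * Y))
          (ropNorm_nonneg B)) (sq_nonneg (rnorm x))]

end DeleteFirstRow

section Complexify

variable {l m n : Type*} [Fintype m]

lemma mulVec_re_eq_of_complexify_mulVec_eq_zero (P Q : Matrix l m ℝ) {v : m → ℂ}
    (h : (P.map ((↑) : ℝ → ℂ) + Complex.I • Q.map ((↑) : ℝ → ℂ)) *ᵥ v = 0) :
    P *ᵥ (fun i => (v i).re) = Q *ᵥ (fun i => (v i).im) := by
  funext i
  have := congrArg Complex.re (congrFun h i)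
  simp only [mulVec, dotProduct, Matrix.add_apply, Matrix.smul_apply, Matrix.map_apply,
    Complex.re_sum, add_mul, Complex.add_re, Complex.re_ofReal_mul, smul_eq_mul, mul_assoc,
    Complex.I_mul_re, Complex.im_ofReal_mul, Finset.sum_add_distrib, Finset.sum_neg_distrib,
    Pi.zero_apply, Complex.zero_re] at this
  simpa [mulVec, dotProduct, add_neg_eq_zero] using this

lemma normSq_sum_ofReal_mul_smul (w : m → ℝ) (v : m → ℂ) {c : ℂ} (hc : ‖c‖ = 1) :
    Complex.normSq (∑ i, (w i : ℂ) * (c • v) i) = Complex.normSq (∑ i, (w i : ℂ) * v i) := by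
  simp only [Pi.smul_apply, smul_eq_mul, mul_left_comm _ c, ← Finset.mul_sum, map_mul,
    Complex.normSq_eq_norm_sq c, hc, one_pow, one_mul]

lemma normSq_sum_ofReal_mul (w : m → ℝ) (v : m → ℂ) :
    Complex.normSq (∑ i, (w i : ℂ) * v i) =
      (w ⬝ᵥ fun i => (v i).re) ^ 2 + (w ⬝ᵥ fun i => (v i).im) ^ 2 := by
  simp [Complex.normSq_apply, Complex.re_sum, Complex.im_sum, dotProduct, sq]

lemma map_ofReal_mul_complexify (A : Matrix l m ℝ) (Y B : Matrix m n ℝ) :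
    A.map ((↑) : ℝ → ℂ) * (Y.map ((↑) : ℝ → ℂ) + Complex.I • B.map ((↑) : ℝ → ℂ)) =
      (A * Y).map ((↑) : ℝ → ℂ) + Complex.I • (A * B).map ((↑) : ℝ → ℂ) := by
  rw [Matrix.mul_add, Matrix.mul_smul, show ((↑) : ℝ → ℂ) = ⇑Complex.ofRealHom from rfl,
    Matrix.map_mul, Matrix.map_mul]

end Complexify

lemma smin_sq_mul_sub_normSq_le {n : ℕ} {Y B : Matrix (Fin (n + 1)) (Fin (n + 1)) ℝ}
    {w : Fin (n + 1) → ℝ} {u : Fin (n + 1) → ℂ} (hw : rnorm w = 1)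
    (hwnull : (delRow (n + 1) ℝ * B) *ᵥ w = 0)
    (hu : (delRow (n + 1) ℝ * B) *ᵥ (fun i => (u i).im) =
      (delRow (n + 1) ℝ * Y) *ᵥ (fun i => (u i).re)) :
    smin B ^ 2 * (cnorm u ^ 2 - Complex.normSq (∑ i, (w i : ℂ) * u i)) ≤
      (ropNorm (delRow (n + 1) ℝ * Y) + ropNorm B) ^ 2 * ∑ i, (u i).re ^ 2 := by
  have h := smin_sq_mul_sub_le hw hwnull hu
  rwa [← cnorm_sq, ← normSq_sum_ofReal_mul, rnorm_sq] at h

theorem real_part_lower_bound_of_complex_null_vector_general (N : ℕ)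
    (Y B : Matrix (Fin N) (Fin N) ℝ)
    (v : Fin N → ℂ) (hv : cnorm v = 1)
    (hnull : ((delRow N ℂ) *
        (Y.map (fun x => (x : ℂ)) + Complex.I • B.map (fun x => (x : ℂ)))).mulVec v = 0)
    (w : Fin N → ℝ) (hw : rnorm w = 1)
    (hwnull : ((delRow N ℝ) * B).mulVec w = 0)
    (θ : ℝ) :
    smin B ^ 2 * (1 - Complex.normSq (∑ i, (w i : ℂ) * v i))
      ≤ (ropNorm ((delRow N ℝ) * Y) + ropNorm B) ^ 2 *
          (∑ i, (Complex.exp (θ * Complex.I) * v i).re ^ 2) := by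
  obtain ⟨n, rfl⟩ : ∃ n, N = n + 1 :=
    Nat.exists_eq_succ_of_ne_zero (by rintro rfl; simp [rnorm] at hw)
  set e := Complex.exp (θ * Complex.I)
  have he : ‖e‖ = 1 := Complex.norm_exp_ofReal_mul_I θ
  have hnull_e : ((delRow (n + 1) ℝ * Y).map ((↑) : ℝ → ℂ) +
      Complex.I • (delRow (n + 1) ℝ * B).map ((↑) : ℝ → ℂ)) *ᵥ (e • v) = 0 := by
    rw [mulVec_smul, ← map_ofReal_mul_complexify, map_delRow, hnull, smul_zero]
  have key := smin_sq_mul_sub_normSq_le hw hwnull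
    (mulVec_re_eq_of_complexify_mulVec_eq_zero _ _ hnull_e).symm
  rwa [cnorm_smul, he, hv, normSq_sum_ofReal_mul_smul w v he, one_mul, one_pow] at key

/-- If `v` is a unit null vector of `J(Y + iB)` and `w` the unit
null vector of `JB`, then for all `θ ∈ [0,2π]`,
`λ₁(B)² (1 - |w^*v|²) ≤ (‖JY‖ + ‖B‖)² ‖Re(e^{iθ} v)‖²`. -/
theorem real_part_lower_bound_of_complex_null_vector (N : ℕ) (hN : 1 ≤ N)
    (Y B : Matrix (Fin N) (Fin N) ℝ)
    (v : Fin N → ℂ) (hv : cnorm v = 1)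
    (hnull : ((delRow N ℂ) *
        (Y.map (fun x => (x : ℂ)) + Complex.I • B.map (fun x => (x : ℂ)))).mulVec v = 0)
    (w : Fin N → ℝ) (hw : rnorm w = 1)
    (hwnull : ((delRow N ℝ) * B).mulVec w = 0)
    (hB : 0 < smin B)
    (θ : ℝ) (hθ : θ ∈ Set.Icc 0 (2 * Real.pi)) :
    smin B ^ 2 * (1 - Complex.normSq (∑ i, (w i : ℂ) * v i))
      ≤ (ropNorm ((delRow N ℝ) * Y) + ropNorm B) ^ 2 *
          (∑ i, (Complex.exp (θ * Complex.I) * v i).re ^ 2) :=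
  real_part_lower_bound_of_complex_null_vector_general N Y B v hv hnull w hw hwnull θ
end

section
/- Let Z ∈ C^{N×N}, j ∈ {1,…,N}, and let H^{(j−1)} be the Hermitization of Z with its first j−1 rows removed; let G^{(j−1)}(iη) be its resolvent. Then the (j,j) diagonal resolvent entry satisfies 1/G^{(j−1)}_{jj}(iη) = −iη − iη Σ_{i=1}^N (2 − 1(i ≤ j)) |e_j^* Z v_i^{(j)}|^2 / ((λ_i^{(j)})^2 + η^2), where λ_i^{(j)} and v_i^{(j)} are the singular values and right singular vectors of Z with its first j rows removed (with λ_i^{(j)} = 0 and ‖v_i^{(j)}‖ = 1 for i ≤ j, and ‖v_i^{(j)}‖^2 = 1/2 in the chosen normalization for i > j). In particular, |G^{(j−1)}_{jj}(iη)| = (η + Σ_i c_i |w_i|^2)^{−1} where c_i = η(2−1(i≤j))/((λ_i^{(j)})^2 + η^2)·N/N and w_i are the entries of the vector of overlaps of Z^* e_j with the singular vectors. -/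
/-!
With `B = J^{(j-1)} Z`, `r` its first row (row `j` of `Z`) and `B' = J^{(j)} Z`, the resolvent of
the Hermitization `[[0, B], [Bᴴ, 0]]` has top-left block `(i/η) (1 - B (BᴴB + η²)⁻¹ Bᴴ)`, so
`G_jj = (i/η) (1 - r (BᴴB + η²)⁻¹ r*)`. Since `BᴴB = B'ᴴB' + r* r` is a rank-one update, the
Sherman–Morrison formula gives `1 / G_jj = -iη (1 + r (B'ᴴB' + η²)⁻¹ r*)`, and the resolution
of the identity `Σᵢ cᵢ vᵢ vᵢ* = 1` by eigenvectors of `B'ᴴB'` (weights `cᵢ = 2 - 1(i ≤ j)`)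
expands this quadratic form as `Σᵢ cᵢ |r · vᵢ|² / (λᵢ² + η²)`.
-/

open Matrix

/-- The `(N-m) × N` matrix deleting the first `m` rows. -/
noncomputable def Jmat (N m : ℕ) : Matrix (Fin (N - m)) (Fin N) ℂ :=
  fun i j => if (j : ℕ) = (i : ℕ) + m then 1 else 0

/-- Hermitization of `Z` with its first `m` rows removed. -/
noncomputable def HermJ (N m : ℕ) (Z : Matrix (Fin N) (Fin N) ℂ) :
    Matrix (Fin (N - m) ⊕ Fin N) (Fin (N - m) ⊕ Fin N) ℂ :=
  Matrix.fromBlocks 0 (Jmat N m * Z) (Jmat N m * Z)ᴴ 0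

namespace Matrix

section Field

variable {m n ι K : Type*} [Fintype m] [Fintype n] [DecidableEq m] [DecidableEq n] [Field K]

theorem inv_fromBlocks_zero_sub_smul_one (B : Matrix m n K) (C : Matrix n m K) {z : K}
    (hz : z ≠ 0) (hCB : IsUnit (C * B - z ^ 2 • 1)) :
    (fromBlocks 0 B C 0 - z • 1)⁻¹ =
      fromBlocks (z⁻¹ • (B * (C * B - z ^ 2 • 1)⁻¹ * C - 1)) (B * (C * B - z ^ 2 • 1)⁻¹)
        ((C * B - z ^ 2 • 1)⁻¹ * C) (z • (C * B - z ^ 2 • 1)⁻¹) := by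
  set W := (C * B - z ^ 2 • 1)⁻¹
  have hW : C * B * W = 1 + z ^ 2 • W := by
    have h := mul_nonsing_inv _ ((isUnit_iff_isUnit_det _).mp hCB)
    rwa [Matrix.sub_mul, Matrix.smul_mul, Matrix.one_mul, sub_eq_iff_eq_add] at h
  have hM : fromBlocks 0 B C 0 - z • 1 = fromBlocks (-z • 1) B C (-z • 1) := by
    rw [← fromBlocks_one, fromBlocks_smul, sub_eq_add_neg, fromBlocks_neg, fromBlocks_add]
    simp
  refine inv_eq_right_inv ?_
  rw [hM, fromBlocks_multiply, ← fromBlocks_one]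
  simp only [Matrix.smul_mul, Matrix.mul_smul, Matrix.one_mul, Matrix.mul_sub, Matrix.mul_one,
    ← Matrix.mul_assoc, hW, Matrix.add_mul, smul_mul]
  congr 1 <;> match_scalars <;> field_simp <;> ring

theorem inv_fromBlocks_zero_sub_smul_one_apply_inl_inl (B : Matrix m n K) (C : Matrix n m K)
    {z : K} (hz : z ≠ 0) (hCB : IsUnit (C * B - z ^ 2 • 1)) (a : m) :
    (fromBlocks 0 B C 0 - z • 1)⁻¹ (Sum.inl a) (Sum.inl a) =
      z⁻¹ * (B a ⬝ᵥ (C * B - z ^ 2 • 1)⁻¹ *ᵥ Cᵀ a - 1) := by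
  rw [inv_fromBlocks_zero_sub_smul_one B C hz hCB, fromBlocks_apply₁₁, smul_apply, sub_apply,
    one_apply_eq, smul_eq_mul, Matrix.mul_assoc]
  simp [mul_apply, dotProduct, mulVec]

/-- The Sherman–Morrison formula, read off on the quadratic form `w ⬝ᵥ _ *ᵥ u`. -/
theorem one_sub_dotProduct_inv_add_vecMulVec_mulVec_mul {P : Matrix n n K} {u w : n → K}
    (hP : IsUnit P) (hPuw : IsUnit (P + vecMulVec u w)) :
    (1 - w ⬝ᵥ (P + vecMulVec u w)⁻¹ *ᵥ u) * (1 + w ⬝ᵥ P⁻¹ *ᵥ u) = 1 := by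
  set x := (P + vecMulVec u w)⁻¹ *ᵥ u
  have hx : P *ᵥ x + (w ⬝ᵥ x) • u = u := by
    rw [← op_smul_eq_smul, ← vecMulVec_mulVec, ← add_mulVec, mulVec_mulVec,
      mul_nonsing_inv _ ((isUnit_iff_isUnit_det _).mp hPuw), one_mulVec]
  have hx' : x + (w ⬝ᵥ x) • P⁻¹ *ᵥ u = P⁻¹ *ᵥ u := by
    have := congrArg (P⁻¹ *ᵥ ·) hx
    rwa [mulVec_add, mulVec_smul, mulVec_mulVec,
      nonsing_inv_mul _ ((isUnit_iff_isUnit_det _).mp hP), one_mulVec] at this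
  have hwx := congrArg (w ⬝ᵥ ·) hx'
  simp only [dotProduct_add, dotProduct_smul, smul_eq_mul] at hwx
  linear_combination -hwx

theorem inv_eq_sum_smul_vecMulVec [Fintype ι] {M : Matrix n n K} {v w : ι → n → K} {c μ : ι → K}
    (hμ : ∀ i, μ i ≠ 0) (hv : ∀ i, M *ᵥ v i = μ i • v i)
    (hsum : ∑ i, c i • vecMulVec (v i) (w i) = 1) :
    M⁻¹ = ∑ i, (c i / μ i) • vecMulVec (v i) (w i) := by
  refine inv_eq_right_inv ?_
  rw [Finset.mul_sum, ← hsum]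
  refine Finset.sum_congr rfl fun i _ => ?_
  rw [mul_smul_comm, mul_vecMulVec, hv, smul_vecMulVec, smul_smul, div_mul_cancel₀ _ (hμ i)]

end Field

section Complex

open scoped ComplexOrder

variable {m n ι : Type*}

theorem isUnit_conjTranspose_mul_self_sub_I_mul_sq_smul_one [Fintype m] [Fintype n]
    [DecidableEq n] (B : Matrix m n ℂ) {η : ℝ} (hη : η ≠ 0) : IsUnit (Bᴴ * B - (Complex.I * η) ^ 2 • 1) := by
  have h : Bᴴ * B - (Complex.I * η) ^ 2 • 1 = Bᴴ * B + (η ^ 2) • (1 : Matrix n n ℂ) := by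
    rw [mul_pow, Complex.I_sq, sub_eq_add_neg, ← neg_smul, neg_mul, neg_neg, one_mul,
      ← Complex.ofReal_pow, Complex.coe_smul]
  rw [h]
  exact (PosDef.posSemidef_add (posSemidef_conjTranspose_mul_self B)
    (PosDef.one.smul (by positivity))).isUnit

theorem dotProduct_vecMulVec_star_mulVec_star [Fintype n] (r v : n → ℂ) :
    r ⬝ᵥ vecMulVec v (star v) *ᵥ star r = Complex.normSq (r ⬝ᵥ v) := by
  rw [vecMulVec_mulVec, op_smul_eq_smul, dotProduct_smul, smul_eq_mul, star_dotProduct_star,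
    Complex.normSq_eq_conj_mul_self]
  rfl

theorem dotProduct_inv_mulVec_star_eq_sum [Fintype n] [DecidableEq n] [Fintype ι]
    {M : Matrix n n ℂ} {v : ι → n → ℂ} {c μ : ι → ℂ} (hμ : ∀ i, μ i ≠ 0)
    (hv : ∀ i, M *ᵥ v i = μ i • v i) (hsum : ∑ i, c i • vecMulVec (v i) (star (v i)) = 1)
    (r : n → ℂ) :
    r ⬝ᵥ M⁻¹ *ᵥ star r = ∑ i, c i / μ i * Complex.normSq (r ⬝ᵥ v i) := by
  rw [inv_eq_sum_smul_vecMulVec hμ hv hsum, sum_mulVec, dotProduct_sum]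
  simp only [smul_mulVec, dotProduct_smul, dotProduct_vecMulVec_star_mulVec_star, smul_eq_mul]

theorem conjTranspose_mul_single_one_mul [Fintype m] [DecidableEq m] (Z : Matrix m n ℂ) (t : m) :
    Zᴴ * single t t (1 : ℂ) * Z = vecMulVec (star (Z t)) (Z t) := by
  rw [single_eq_single_vecMulVec_single, mul_vecMulVec, vecMulVec_mul, mulVec_single_one,
    single_one_vecMul]
  rfl

end Complex

end Matrix

section Jmat

variable {N : ℕ}

theorem Jmat_mul_apply {m : ℕ} (Z : Matrix (Fin N) (Fin N) ℂ) (i : Fin (N - m)) (p : Fin N) :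
    (Jmat N m * Z) i p = Z ⟨i + m, by omega⟩ p := by
  rw [mul_apply, Finset.sum_eq_single ⟨i + m, by omega⟩] <;> simp +contextual [Jmat, Fin.ext_iff]

theorem conjTranspose_mul_self_Jmat (m : ℕ) :
    (Jmat N m)ᴴ * Jmat N m = diagonal fun t : Fin N => if m ≤ (t : ℕ) then 1 else 0 := by
  ext p q
  simp only [mul_apply, conjTranspose_apply, Jmat, apply_ite star, star_one, star_zero, ite_mul,
    one_mul, zero_mul, diagonal_apply, ← ite_and]
  by_cases hpq : p = q ∧ m ≤ (p : ℕ)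
  · obtain ⟨rfl, hmp⟩ := hpq
    rw [Finset.sum_eq_single ⟨p - m, by omega⟩]
    · simp [Nat.sub_add_cancel hmp, hmp]
    · intro i _ hi
      rw [if_neg (fun h => hi (Fin.ext (by simp; omega)))]
    · simp
  · rw [if_neg hpq, Finset.sum_eq_zero fun i _ => ?_]
    split_ifs <;> first | rfl | exact absurd ⟨Fin.ext (by omega), by omega⟩ hpq

theorem conjTranspose_mul_self_Jmat_mul_eq_succ_add_vecMulVec (Z : Matrix (Fin N) (Fin N) ℂ)
    {m : ℕ} (hm : m < N) :
    (Jmat N m * Z)ᴴ * (Jmat N m * Z) =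
      (Jmat N (m + 1) * Z)ᴴ * (Jmat N (m + 1) * Z) + vecMulVec (star (Z ⟨m, hm⟩)) (Z ⟨m, hm⟩) := by
  have hsplit : (Jmat N m)ᴴ * Jmat N m =
      (Jmat N (m + 1))ᴴ * Jmat N (m + 1) + single ⟨m, hm⟩ ⟨m, hm⟩ 1 := by
    ext p q
    simp only [conjTranspose_mul_self_Jmat, Matrix.add_apply, diagonal_apply, single_apply]
    rcases eq_or_ne p q with rfl | hpq
    · split_ifs <;> simp_all [Fin.ext_iff] <;> omega
    · have hmpq : ¬(⟨m, hm⟩ = p ∧ ⟨m, hm⟩ = q) := fun h => hpq (h.1.symm.trans h.2)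
      simp [hpq, hmpq]
  have hgram : ∀ k, (Jmat N k * Z)ᴴ * (Jmat N k * Z) = Zᴴ * ((Jmat N k)ᴴ * Jmat N k) * Z :=
    fun k => by
      rw [conjTranspose_mul, Matrix.mul_assoc, ← Matrix.mul_assoc (Jmat N k)ᴴ, ← Matrix.mul_assoc]
  rw [hgram, hgram, hsplit, Matrix.mul_add, Matrix.add_mul, conjTranspose_mul_single_one_mul]

/-- Deleting row `m` changes the Gram matrix of `Jmat N m * Z` by the rank-one term of that row,
so Sherman–Morrison passes from the Hermitization with `m` rows removed to `m + 1` rows removed. -/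
theorem inv_HermJ_sub_smul_one_apply_zero (Z : Matrix (Fin N) (Fin N) ℂ) {m : ℕ} (hm : m < N)
    {η : ℝ} (hη : η ≠ 0) :
    ((HermJ N m Z - (Complex.I * η) • 1)⁻¹ (Sum.inl ⟨0, by omega⟩) (Sum.inl ⟨0, by omega⟩))⁻¹ =
      -(Complex.I * η) * (1 + Z ⟨m, hm⟩ ⬝ᵥ
        ((Jmat N (m + 1) * Z)ᴴ * (Jmat N (m + 1) * Z) - (Complex.I * η) ^ 2 • 1)⁻¹ *ᵥ
          star (Z ⟨m, hm⟩)) := by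
  set r := Z ⟨m, hm⟩
  set z : ℂ := Complex.I * η
  set B := Jmat N m * Z
  set P := (Jmat N (m + 1) * Z)ᴴ * (Jmat N (m + 1) * Z) - z ^ 2 • 1
  have hz : z ≠ 0 := mul_ne_zero Complex.I_ne_zero (by exact_mod_cast hη)
  have hrow : B ⟨0, by omega⟩ = r := funext fun p => by simp [B, r, Jmat_mul_apply]
  have hBB : Bᴴ * B - z ^ 2 • 1 = P + vecMulVec (star r) r := by
    rw [conjTranspose_mul_self_Jmat_mul_eq_succ_add_vecMulVec Z hm]
    exact add_sub_right_comm _ _ _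
  have hentry : (fromBlocks 0 B Bᴴ 0 - z • 1)⁻¹ (Sum.inl ⟨0, by omega⟩) (Sum.inl ⟨0, by omega⟩) =
      z⁻¹ * (r ⬝ᵥ (P + vecMulVec (star r) r)⁻¹ *ᵥ star r - 1) := by
    rw [← hBB, ← hrow]
    exact inv_fromBlocks_zero_sub_smul_one_apply_inl_inl B Bᴴ hz
      (isUnit_conjTranspose_mul_self_sub_I_mul_sq_smul_one B hη) _
  have hSM : (1 - r ⬝ᵥ (P + vecMulVec (star r) r)⁻¹ *ᵥ star r) * (1 + r ⬝ᵥ P⁻¹ *ᵥ star r) = 1 :=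
    one_sub_dotProduct_inv_add_vecMulVec_mulVec_mul
      (isUnit_conjTranspose_mul_self_sub_I_mul_sq_smul_one (Jmat N (m + 1) * Z) hη)
      (hBB ▸ isUnit_conjTranspose_mul_self_sub_I_mul_sq_smul_one B hη)
  refine inv_eq_of_mul_eq_one_right ?_
  rw [HermJ, hentry]
  field_simp
  linear_combination hSM

end Jmat

/-- **Schur complement identity.** Expression of the `(j,j)` diagonal
resolvent entry of the Hermitization of `Z` with first `j-1` rows removed in terms of the
singular values `λᵢ^{(j)}` and right singular vectors `vᵢ^{(j)}` of `Z` with first `j` rows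
removed; in particular the formula for its absolute value. -/
theorem schur_complement_diagonal_resolvent (N j : ℕ) (hj1 : 1 ≤ j) (hjN : j ≤ N)
    (Z : Matrix (Fin N) (Fin N) ℂ) (η : ℝ) (hη : 0 < η)
    (lam : Fin N → ℝ) (v : Fin N → Fin N → ℂ)
    (heig : ∀ i, (Zᴴ * (Jmat N j)ᴴ * (Jmat N j * Z)).mulVec (v i)
      = (((lam i) ^ 2 : ℝ) : ℂ) • v i)
    (hcomp : ∑ i : Fin N, ((2 - if (i : ℕ) < j then 1 else 0 : ℂ)) •
        vecMulVec (v i) (star (v i)) = 1) :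
    ((HermJ N (j - 1) Z - (Complex.I * η) • 1)⁻¹
        (Sum.inl ⟨0, by omega⟩) (Sum.inl ⟨0, by omega⟩))⁻¹
      = -(Complex.I * η) - Complex.I * η *
          ((∑ i : Fin N, (2 - if (i : ℕ) < j then 1 else 0 : ℝ) *
            Complex.normSq ((Z.mulVec (v i)) ⟨j - 1, by omega⟩) /
              (lam i ^ 2 + η ^ 2) : ℝ) : ℂ) ∧
    ‖(HermJ N (j - 1) Z - (Complex.I * η) • 1)⁻¹
        (Sum.inl ⟨0, by omega⟩) (Sum.inl ⟨0, by omega⟩)‖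
      = (η + ∑ i : Fin N, ((2 - if (i : ℕ) < j then 1 else 0 : ℝ) * η /
            (lam i ^ 2 + η ^ 2)) *
          Complex.normSq ((Z.mulVec (v i)) ⟨j - 1, by omega⟩))⁻¹ := by
  set G := (HermJ N (j - 1) Z - (Complex.I * η) • 1)⁻¹
    (Sum.inl ⟨0, by omega⟩) (Sum.inl ⟨0, by omega⟩)
  set S : ℝ := ∑ i : Fin N, (2 - if (i : ℕ) < j then 1 else 0 : ℝ) *
    Complex.normSq ((Z.mulVec (v i)) ⟨j - 1, by omega⟩) / (lam i ^ 2 + η ^ 2)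
  have hGinv : G⁻¹ = -(Complex.I * η) * (1 + S) := by
    have h := inv_HermJ_sub_smul_one_apply_zero Z (m := j - 1) (by omega) hη.ne'
    rw [Nat.sub_add_cancel hj1] at h
    rw [h, dotProduct_inv_mulVec_star_eq_sum (fun i => Complex.ofReal_ne_zero.mpr
      (by positivity : lam i ^ 2 + η ^ 2 ≠ 0)) (fun i => ?_) hcomp]
    · push_cast [S, apply_ite]
      simp only [div_mul_eq_mul_div, mulVec]
    · rw [sub_mulVec, conjTranspose_mul, heig, smul_mulVec, one_mulVec, ← sub_smul]
      push_cast
      rw [mul_pow, Complex.I_sq, neg_one_mul, sub_neg_eq_add]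
  have hS : 0 ≤ S := Finset.sum_nonneg fun i _ => by
    have hc : (0 : ℝ) ≤ 2 - if (i : ℕ) < j then 1 else 0 := by split_ifs <;> norm_num
    exact div_nonneg (mul_nonneg hc (Complex.normSq_nonneg _)) (by positivity)
  have hnorm : ‖G⁻¹‖ = η * (1 + S) := by
    rw [hGinv, norm_mul, norm_neg, norm_mul, Complex.norm_I, one_mul, ← Complex.ofReal_one,
      ← Complex.ofReal_add, Complex.norm_real, Complex.norm_real, Real.norm_of_nonneg hη.le,
      Real.norm_of_nonneg (by linarith)]
  refine ⟨by rw [hGinv]; ring, ?_⟩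
  rw [← inv_inv G, norm_inv, hnorm, mul_add, mul_one, Finset.mul_sum]
  congr 2
  refine Finset.sum_congr rfl fun i _ => ?_
  ring
end

section
/- Let A ∈ C^{N×N} have simple spectrum, with σ_i, l_i, r_i, O_ii as above. Then for each i, the eigenvalue condition number satisfies √(O_ii) = lim_{z→σ_i} |σ_i − z| / λ_1(A − z), where λ_1(A − z) is the smallest singular value of A − z. -/
/-!
Biorthogonality of the eigenvectors says `∑ⱼ rⱼ lⱼ* = 1`, so the resolvent is
`(A - z)⁻¹ = ∑ⱼ (σⱼ - z)⁻¹ rⱼ lⱼ*`. The smallest singular value of an invertible operator is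
the reciprocal of the norm of its inverse, hence
`|σᵢ - z| / λ₁(A - z) = ‖∑ⱼ (σᵢ - z) / (σⱼ - z) • rⱼ lⱼ*‖`. As `z → σᵢ` the weights tend to
`δᵢⱼ` (the eigenvalues are distinct), and the limit is the norm `‖rᵢ‖ ‖lᵢ‖` of the rank-one
operator `rᵢ lᵢ*`.
-/

open Matrix

/-- Smallest singular value of a complex square matrix. -/
noncomputable def sminC {n : Type*} [Fintype n] (M : Matrix n n ℂ) : ℝ :=
  sInf {c | ∃ v : n → ℂ, cnorm v = 1 ∧ c = cnorm (M.mulVec v)}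

open Filter Topology

section InverseOperator

variable {𝕜 E : Type*} [RCLike 𝕜] [NormedAddCommGroup E] [NormedSpace 𝕜 E] [Nontrivial E]

theorem sInf_norm_image_sphere_eq_inv_norm_of_mul_eq_one {T S : E →L[𝕜] E} (hST : S * T = 1)
    (hTS : T * S = 1) : sInf ((fun x => ‖T x‖) '' Metric.sphere 0 1) = ‖S‖⁻¹ := by
  have hS : 0 < ‖S‖ := norm_pos_iff.2 fun h => by simp [h] at hTS
  refine csInf_eq_of_forall_ge_of_forall_gt_exists_lt
    ((Set.nonempty_coe_sort.1 (NormedSpace.sphere_nonempty_rclike 𝕜 zero_le_one)).image _) ?_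
    fun c hc => ?_
  · rintro - ⟨x, hx, rfl⟩
    rw [mem_sphere_zero_iff_norm] at hx
    rw [inv_le_iff_one_le_mul₀' hS]
    calc 1 = ‖S (T x)‖ := by rw [← hx]; exact congrArg norm (DFunLike.congr_fun hST x).symm
      _ ≤ ‖S‖ * ‖T x‖ := S.le_opNorm _
  · have hc0 : 0 < c := (inv_pos.2 hS).trans hc
    obtain ⟨y, hy, hSy⟩ := S.exists_lt_apply_of_lt_opNorm (inv_lt_of_inv_lt₀ hS hc)
    have hSy0 : 0 < ‖S y‖ := (inv_pos.2 hc0).trans hSy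
    have hTSy : T (S y) = y := DFunLike.congr_fun hTS y
    refine ⟨_, ⟨(‖S y‖ : 𝕜)⁻¹ • S y, ?_, rfl⟩, ?_⟩
    · exact mem_sphere_zero_iff_norm.2 (norm_smul_inv_norm (norm_pos_iff.1 hSy0))
    · show ‖T _‖ < c
      rw [map_smul, hTSy, norm_smul, norm_inv, RCLike.norm_ofReal, abs_norm,
        inv_mul_lt_iff₀ hSy0]
      calc ‖y‖ < 1 := hy
        _ = c⁻¹ * c := (inv_mul_cancel₀ hc0.ne').symm
        _ < ‖S y‖ * c := mul_lt_mul_of_pos_right hSy hc0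

end InverseOperator

theorem cnorm_eq_norm_toLp {n : Type*} [Fintype n] (v : n → ℂ) :
    cnorm v = ‖WithLp.toLp 2 v‖ := by
  simp [EuclideanSpace.norm_eq, cnorm, Complex.normSq_eq_norm_sq]

section Matrices

variable {n : Type*} [Fintype n] [DecidableEq n]

theorem sminC_eq_sInf_image_sphere (M : Matrix n n ℂ) :
    sminC M = sInf ((fun x => ‖toEuclideanCLM (𝕜 := ℂ) M x‖) '' Metric.sphere 0 1) := by
  unfold sminC
  congr 1
  ext c
  constructor
  · rintro ⟨v, hv, rfl⟩
    exact ⟨WithLp.toLp 2 v, by simpa [cnorm_eq_norm_toLp] using hv,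
      by simp [cnorm_eq_norm_toLp]⟩
  · rintro ⟨x, hx, rfl⟩
    exact ⟨WithLp.ofLp x, by simpa [cnorm_eq_norm_toLp] using hx,
      by rw [cnorm_eq_norm_toLp]; rfl⟩

theorem sminC_eq_inv_norm_of_mul_eq_one [Nonempty n] {M R : Matrix n n ℂ} (h : M * R = 1) :
    sminC M = ‖toEuclideanCLM (𝕜 := ℂ) R‖⁻¹ := by
  rw [sminC_eq_sInf_image_sphere]
  exact sInf_norm_image_sphere_eq_inv_norm_of_mul_eq_one
    (by rw [← map_mul, mul_eq_one_comm.1 h, map_one]) (by rw [← map_mul, h, map_one])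

theorem norm_toEuclideanCLM_vecMulVec (x y : n → ℂ) :
    ‖toEuclideanCLM (𝕜 := ℂ) (vecMulVec x (star y))‖ = cnorm x * cnorm y := by
  have : toEuclideanCLM (𝕜 := ℂ) (vecMulVec x (star y)) =
      InnerProductSpace.rankOne ℂ (WithLp.toLp 2 x) (WithLp.toLp 2 y) := by
    ext v j
    simp [ofLp_toEuclideanCLM, vecMulVec_mulVec, EuclideanSpace.inner_eq_star_dotProduct,
      mul_comm, dotProduct_comm]
  rw [this, InnerProductSpace.norm_rankOne, cnorm_eq_norm_toLp, cnorm_eq_norm_toLp]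

end Matrices

theorem sum_vecMulVec_eq_one_of_dotProduct {R ι : Type*} [CommRing R] [Fintype ι]
    [DecidableEq ι] {u v : ι → ι → R} (h : ∀ i j, u i ⬝ᵥ v j = if i = j then 1 else 0) :
    ∑ j, vecMulVec (v j) (u j) = 1 := by
  have huv : of u * (of v)ᵀ = 1 := by
    ext i j
    simpa [mul_apply, dotProduct, one_apply] using h i j
  rw [← mul_eq_one_comm.1 huv]
  ext a b
  simp [mul_apply, vecMulVec_apply, Matrix.sum_apply]

theorem sub_smul_one_mul_sum_inv_smul_vecMulVec {K ι : Type*} [Field K] [Fintype ι]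
    [DecidableEq ι] {A : Matrix ι ι K} {σ : ι → K} {r w : ι → ι → K}
    (hr : ∀ j, A *ᵥ r j = σ j • r j) (hbi : ∀ i j, w i ⬝ᵥ r j = if i = j then 1 else 0)
    {z : K} (hz : ∀ j, σ j ≠ z) :
    (A - z • 1) * ∑ j, (σ j - z)⁻¹ • vecMulVec (r j) (w j) = 1 := by
  rw [Finset.mul_sum]
  conv_rhs => rw [← sum_vecMulVec_eq_one_of_dotProduct hbi]
  refine Finset.sum_congr rfl fun j _ => ?_
  rw [mul_smul_comm, mul_vecMulVec, sub_mulVec, hr j, smul_mulVec, one_mulVec, ← sub_smul,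
    smul_vecMulVec, smul_smul, inv_mul_cancel₀ (sub_ne_zero.2 (hz j)), one_smul]

theorem eventually_nhdsNE_forall_ne {X ι : Type*} [TopologicalSpace X] [T1Space X] [Finite ι]
    {σ : ι → X} (hσ : Function.Injective σ) (i : ι) : ∀ᶠ z in 𝓝[≠] σ i, ∀ j, σ j ≠ z := by
  refine eventually_all.2 fun j => ?_
  rcases eq_or_ne j i with rfl | hj
  · exact eventually_mem_nhdsWithin.mono fun z hz => Ne.symm hz
  · exact ((eventually_ne_nhds (hσ.ne hj.symm)).filter_mono nhdsWithin_le_nhds).mono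
      fun z hz => Ne.symm hz

theorem tendsto_sub_div_sub_nhdsNE {𝕜 : Type*} [NontriviallyNormedField 𝕜] [DecidableEq 𝕜]
    (a b : 𝕜) :
    Tendsto (fun z => (a - z) / (b - z)) (𝓝[≠] a) (𝓝 (if b = a then 1 else 0)) := by
  split_ifs with h
  · subst h
    exact tendsto_const_nhds.congr' (eventually_nhdsWithin_of_forall fun z hz =>
      (div_self (sub_ne_zero.2 (Ne.symm hz))).symm)
  · have : Tendsto (fun z => (a - z) / (b - z)) (𝓝 a) (𝓝 ((a - a) / (b - a))) :=
      (tendsto_const_nhds.sub tendsto_id).div (tendsto_const_nhds.sub tendsto_id)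
        (sub_ne_zero.2 h)
    rw [sub_self, zero_div] at this
    exact this.mono_left nhdsWithin_le_nhds

theorem condition_number_as_limit_general (N : ℕ) (A : Matrix (Fin N) (Fin N) ℂ)
    (σ : Fin N → ℂ) (r l : Fin N → (Fin N → ℂ))
    (hσ : Function.Injective σ)
    (hr : ∀ i, A.mulVec (r i) = σ i • r i)
    (hbi : ∀ i j, (star (l i)) ⬝ᵥ (r j) = if i = j then (1 : ℂ) else 0)
    (i : Fin N) :
    Filter.Tendsto (fun z : ℂ => ‖σ i - z‖ / sminC (A - z • 1))
      (nhdsWithin (σ i) {σ i}ᶜ)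
      (nhds (Real.sqrt ((∑ a, Complex.normSq (l i a)) * (∑ a, Complex.normSq (r i a))))) := by
  have : Nonempty (Fin N) := ⟨i⟩
  set P : Fin N → (EuclideanSpace ℂ (Fin N) →L[ℂ] EuclideanSpace ℂ (Fin N)) :=
    fun j => toEuclideanCLM (𝕜 := ℂ) (vecMulVec (r j) (star (l j)))
  have hratio : ∀ᶠ z in 𝓝[≠] σ i,
      ‖∑ j, ((σ i - z) / (σ j - z)) • P j‖ = ‖σ i - z‖ / sminC (A - z • 1) := by
    filter_upwards [eventually_nhdsNE_forall_ne hσ i] with z hz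
    rw [sminC_eq_inv_norm_of_mul_eq_one (sub_smul_one_mul_sum_inv_smul_vecMulVec hr hbi hz),
      div_inv_eq_mul, ← norm_smul, map_sum, Finset.smul_sum]
    simp only [map_smul, smul_smul, div_eq_mul_inv, P]
  have hlim : Tendsto (fun z => ∑ j, ((σ i - z) / (σ j - z)) • P j) (𝓝[≠] σ i) (𝓝 (P i)) := by
    have := tendsto_finsetSum Finset.univ fun j _ =>
      (tendsto_sub_div_sub_nhdsNE (σ i) (σ j)).smul_const (P j)
    convert this using 2
    rw [Finset.sum_eq_single i (fun j _ hj => by rw [if_neg (hσ.ne hj)]; exact zero_smul ℂ (P j))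
      (by simp), if_pos rfl, one_smul]
  rw [Real.sqrt_mul (Finset.sum_nonneg fun a _ => Complex.normSq_nonneg _), ← cnorm, ← cnorm,
    mul_comm, ← norm_toEuclideanCLM_vecMulVec]
  exact hlim.norm.congr' hratio

/-- For a matrix with simple spectrum, the eigenvalue condition number
satisfies `√(O_ii) = lim_{z → σᵢ} |σᵢ - z| / λ₁(A - z)`. -/
theorem condition_number_as_limit (N : ℕ) (A : Matrix (Fin N) (Fin N) ℂ)
    (σ : Fin N → ℂ) (r l : Fin N → (Fin N → ℂ))
    (hσ : Function.Injective σ)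
    (hr : ∀ i, A.mulVec (r i) = σ i • r i)
    (hl : ∀ i, Aᴴ.mulVec (l i) = (starRingEnd ℂ) (σ i) • l i)
    (hbi : ∀ i j, (star (l i)) ⬝ᵥ (r j) = if i = j then (1 : ℂ) else 0)
    (i : Fin N) :
    Filter.Tendsto (fun z : ℂ => ‖σ i - z‖ / sminC (A - z • 1))
      (nhdsWithin (σ i) {σ i}ᶜ)
      (nhds (Real.sqrt ((∑ a, Complex.normSq (l i a)) * (∑ a, Complex.normSq (r i a))))) :=
  condition_number_as_limit_general N A σ r l hσ hr hbi i
end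

section
/- Let D' = diag(m_1, m_2) with m_1, m_2 > 0, let c_0 ∈ (0, 1/2), and let ν be a probability measure on R^2 with density bounded by M. Then ∫_{R^2} (c_0 + ‖D' x‖^2)^{−1} dν(x) ≤ 1 + C · (M / (m_1 m_2)) · |log c_0| for a universal constant C. -/
open MeasureTheory Set

/-! By the layer-cake formula, `∫ f dν = ∫₀^∞ ν {f > t} dt` for `f = (c₀ + ‖D'x‖²)⁻¹`. As `ν` is
a probability measure, the range `t ≤ 1` contributes at most `1`, and as `f ≤ c₀⁻¹`, the range
`t ≥ c₀⁻¹` contributes nothing. For `1 < t < c₀⁻¹` the set `{f > t}` lies in the ellipse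
`‖D'x‖² < t⁻¹`, which fits in a box of area `4 / (m₁ m₂ t)`; the density bound then gives
`ν {f > t} ≤ 4M / (m₁ m₂ t)`, whose integral over `(1, c₀⁻¹)` is `4M |log c₀| / (m₁ m₂)`. -/

theorem lintegral_Ioo_one_ofReal_div {c K : ℝ} (hc : 0 ≤ c) (hK : 1 ≤ K) :
    ∫⁻ t in Ioo 1 K, ENNReal.ofReal (c / t) = ENNReal.ofReal (c * Real.log K) := by
  have h_cont : ContinuousOn (fun t : ℝ => c / t) (Icc 1 K) :=
    continuousOn_const.div continuousOn_id fun t ht => (zero_lt_one.trans_le ht.1).ne'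
  have h_int : IntegrableOn (fun t : ℝ => c / t) (Ioo 1 K) :=
    (h_cont.integrableOn_compact isCompact_Icc).mono_set Ioo_subset_Icc_self
  have h_nonneg : 0 ≤ᵐ[volume.restrict (Ioo 1 K)] fun t : ℝ => c / t :=
    (ae_restrict_iff' measurableSet_Ioo).2 <| ae_of_all _ fun t ht =>
      div_nonneg hc (zero_le_one.trans ht.1.le)
  rw [← ofReal_integral_eq_lintegral_ofReal h_int h_nonneg, ← integral_Ioc_eq_integral_Ioo,
    ← intervalIntegral.integral_of_le hK]
  simp only [div_eq_mul_inv, intervalIntegral.integral_const_mul,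
    integral_inv_of_pos one_pos (zero_lt_one.trans_le hK), inv_one, mul_one]

theorem integral_le_one_add_mul_log_of_meas_lt_le {α : Type*} [MeasurableSpace α]
    {μ : Measure α} [IsProbabilityMeasure μ] {f : α → ℝ} {c K : ℝ}
    (hf_nonneg : ∀ x, 0 ≤ f x) (hf_meas : AEMeasurable f μ) (hf_le : ∀ x, f x ≤ K)
    (hc : 0 ≤ c) (hK : 1 ≤ K)
    (h_tail : ∀ t ∈ Ioo 1 K, μ {x | t < f x} ≤ ENNReal.ofReal (c / t)) :
    ∫ x, f x ∂μ ≤ 1 + c * Real.log K := by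
  have h_nonneg : 0 ≤ᵐ[μ] f := ae_of_all _ hf_nonneg
  have h_lintegral :
      ∫⁻ x, ENNReal.ofReal (f x) ∂μ ≤ 1 + ENNReal.ofReal (c * Real.log K) := by
    have h_cover : Ioi (0 : ℝ) ⊆ (Ioc 0 1 ∪ Ioo 1 K) ∪ Ici K := fun t ht => by
      rcases le_or_gt t 1 with h1 | h1
      · exact Or.inl (Or.inl ⟨ht, h1⟩)
      rcases lt_or_ge t K with hK' | hK'
      · exact Or.inl (Or.inr ⟨h1, hK'⟩)
      · exact Or.inr hK'
    have h_low : ∫⁻ t in Ioc 0 1, μ {x | t < f x} ≤ 1 :=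
      (lintegral_mono fun _ => prob_le_one).trans (by simp)
    have h_mid : ∫⁻ t in Ioo 1 K, μ {x | t < f x} ≤ ENNReal.ofReal (c * Real.log K) :=
      (setLIntegral_mono' measurableSet_Ioo h_tail).trans_eq
        (lintegral_Ioo_one_ofReal_div hc hK)
    have h_high : ∫⁻ t in Ici K, μ {x | t < f x} = 0 :=
      setLIntegral_eq_zero measurableSet_Ici fun t (ht : K ≤ t) => by
        have h_empty : {x | t < f x} = ∅ :=
          eq_empty_of_forall_notMem fun x (hx : t < f x) => (hf_le x).not_gt (ht.trans_lt hx)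
        simp [h_empty]
    calc ∫⁻ x, ENNReal.ofReal (f x) ∂μ = ∫⁻ t in Ioi 0, μ {x | t < f x} :=
          lintegral_eq_lintegral_meas_lt μ h_nonneg hf_meas
      _ ≤ ∫⁻ t in (Ioc 0 1 ∪ Ioo 1 K) ∪ Ici K, μ {x | t < f x} := lintegral_mono_set h_cover
      _ ≤ (∫⁻ t in Ioc 0 1, μ {x | t < f x}) + (∫⁻ t in Ioo 1 K, μ {x | t < f x})
            + ∫⁻ t in Ici K, μ {x | t < f x} :=
          (lintegral_union_le _ _ _).trans (add_le_add_left (lintegral_union_le _ _ _) _)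
      _ ≤ 1 + ENNReal.ofReal (c * Real.log K) := by
          rw [h_high, add_zero]; exact add_le_add h_low h_mid
  rw [integral_eq_lintegral_of_nonneg_ae h_nonneg hf_meas.aestronglyMeasurable]
  calc (∫⁻ x, ENNReal.ofReal (f x) ∂μ).toReal
      ≤ (1 + ENNReal.ofReal (c * Real.log K)).toReal :=
        ENNReal.toReal_mono (by finiteness) h_lintegral
    _ = 1 + c * Real.log K := by
        rw [ENNReal.toReal_add (by simp) (by simp), ENNReal.toReal_one,
          ENNReal.toReal_ofReal (mul_nonneg hc (Real.log_nonneg hK))]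

theorem setOf_sq_mul_lt_subset_Ioo {m s : ℝ} (hm : 0 < m) :
    {x : ℝ | (m * x) ^ 2 < s} ⊆ Ioo (-(√s / m)) (√s / m) := fun x hx => by
  have hs : (m * x) ^ 2 < √s ^ 2 := by
    rwa [Real.sq_sqrt (((sq_nonneg _).trans_lt hx).le)]
  obtain ⟨h₁, h₂⟩ := abs_lt_of_sq_lt_sq' hs (Real.sqrt_nonneg s)
  constructor
  · rw [← neg_div, div_lt_iff₀ hm]; linarith
  · rwa [lt_div_iff₀ hm, mul_comm]

theorem volume_setOf_sq_mul_add_sq_mul_lt_le {m₁ m₂ : ℝ} (hm₁ : 0 < m₁) (hm₂ : 0 < m₂)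
    (s : ℝ) :
    volume {p : ℝ × ℝ | (m₁ * p.1) ^ 2 + (m₂ * p.2) ^ 2 < s}
      ≤ ENNReal.ofReal (4 * s / (m₁ * m₂)) := by
  rcases lt_or_ge s 0 with hs | hs
  · have : {p : ℝ × ℝ | (m₁ * p.1) ^ 2 + (m₂ * p.2) ^ 2 < s} = ∅ :=
      eq_empty_of_forall_notMem fun p hp => by
        have := add_nonneg (sq_nonneg (m₁ * p.1)) (sq_nonneg (m₂ * p.2))
        exact (hp.trans hs).not_ge this
    simp [this]
  have h_box : {p : ℝ × ℝ | (m₁ * p.1) ^ 2 + (m₂ * p.2) ^ 2 < s}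
      ⊆ Ioo (-(√s / m₁)) (√s / m₁) ×ˢ Ioo (-(√s / m₂)) (√s / m₂) :=
    fun p (hp : (m₁ * p.1) ^ 2 + (m₂ * p.2) ^ 2 < s) =>
      ⟨setOf_sq_mul_lt_subset_Ioo hm₁ (by
          show (m₁ * p.1) ^ 2 < s; nlinarith [sq_nonneg (m₂ * p.2)]),
        setOf_sq_mul_lt_subset_Ioo hm₂ (by
          show (m₂ * p.2) ^ 2 < s; nlinarith [sq_nonneg (m₁ * p.1)])⟩
  refine (measure_mono h_box).trans_eq ?_
  rw [Measure.volume_eq_prod, Measure.prod_prod, Real.volume_Ioo, Real.volume_Ioo,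
    ← ENNReal.ofReal_mul (by rw [sub_neg_eq_add]; positivity)]
  congr 1
  field_simp
  rw [Real.sq_sqrt hs]
  ring

/-- For `D' = diag(m₁,m₂)` with `m₁,m₂ > 0`, `c₀ ∈ (0,1/2)`, and a
probability measure `ν` on `ℝ²` with density bounded by `M`,
`∫ (c₀ + ‖D'x‖²)⁻¹ dν ≤ 1 + C (M/(m₁m₂)) |log c₀|` for a universal constant `C`. -/
theorem diagonal_weighted_inverse_moment :
    ∃ C : ℝ, 0 < C ∧
      ∀ m₁ m₂ : ℝ, 0 < m₁ → 0 < m₂ →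
      ∀ c₀ : ℝ, 0 < c₀ → c₀ < 1 / 2 →
      ∀ M : ℝ, 0 ≤ M →
      ∀ ν : Measure (ℝ × ℝ), IsProbabilityMeasure ν →
      (∀ s : Set (ℝ × ℝ), MeasurableSet s → ν s ≤ ENNReal.ofReal M * volume s) →
      ∫ p, (c₀ + ((m₁ * p.1) ^ 2 + (m₂ * p.2) ^ 2))⁻¹ ∂ν
        ≤ 1 + C * (M / (m₁ * m₂)) * |Real.log c₀| := by
  refine ⟨4, by norm_num, fun m₁ m₂ hm₁ hm₂ c₀ hc₀ hc₀_half M hM ν _ hν => ?_⟩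
  set q : ℝ × ℝ → ℝ := fun p => (m₁ * p.1) ^ 2 + (m₂ * p.2) ^ 2
  have hq : ∀ p, 0 ≤ q p := fun p => by positivity
  have h_tail : ∀ t ∈ Ioo 1 c₀⁻¹, ν {p | t < (c₀ + q p)⁻¹}
      ≤ ENNReal.ofReal (4 * M / (m₁ * m₂) / t) := fun t ht => by
    have ht₀ : 0 < t := zero_lt_one.trans ht.1
    have h_sub : {p | t < (c₀ + q p)⁻¹} ⊆ {p | q p < t⁻¹} := fun p (hp : t < _) => by
      have := (lt_inv_comm₀ ht₀ (by positivity)).1 hp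
      show q p < t⁻¹; linarith
    calc ν {p | t < (c₀ + q p)⁻¹} ≤ ENNReal.ofReal M * volume {p | q p < t⁻¹} :=
          (measure_mono h_sub).trans (hν _ (measurableSet_lt (by fun_prop) measurable_const))
      _ ≤ ENNReal.ofReal M * ENNReal.ofReal (4 * t⁻¹ / (m₁ * m₂)) := by
          gcongr; exact volume_setOf_sq_mul_add_sq_mul_lt_le hm₁ hm₂ _
      _ = ENNReal.ofReal (4 * M / (m₁ * m₂) / t) := by
          rw [← ENNReal.ofReal_mul hM]; congr 1; field_simp
  have h_main := integral_le_one_add_mul_log_of_meas_lt_le (μ := ν) (K := c₀⁻¹)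
    (fun p => (inv_pos.2 (by positivity : 0 < c₀ + q p)).le)
    (by fun_prop (disch := exact fun p => (by positivity : 0 < c₀ + q p).ne'))
    (fun p => inv_anti₀ hc₀ (le_add_of_nonneg_right (hq p))) (by positivity)
    (one_le_inv₀ hc₀ |>.2 (by linarith)) h_tail
  rwa [Real.log_inv, ← abs_of_neg (Real.log_neg hc₀ (by linarith)), mul_div_assoc] at h_main
end
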